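/- arXiv:2404.00617 — 3 statements merged into one kernel-verified Lean document; each statement's English description precedes it below -/
import Mathlib

section
/- For probability vectors p, q in the d-dimensional simplex, there exists a bistochastic (doubly stochastic) d×d matrix Λ such that Λp = q if and only if for every k in {1,...,d}, the sum of the k largest entries of p is at least the sum of the k largest entries of q. -/
open Finset

/-- The sum of the `k` largest entries of `p` (as a supremum over subsets of size `k`). -/
noncomputable def sumLargest {ι : Type*} [Fintype ι] (p : ι → ℝ) (k : ℕ) : ℝ :=
  sSup {x : ℝ | ∃ s : Finset ι, s.card = k ∧ ∑ i ∈ s, p i = x}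

/-- `p` majorises `q`: for every `k`, the sum of the `k` largest entries of `p`
is at least the sum of the `k` largest entries of `q`. -/
def Majorizes {ι : Type*} [Fintype ι] (p q : ι → ℝ) : Prop :=
  ∀ k : ℕ, k ≤ Fintype.card ι → sumLargest q k ≤ sumLargest p k

/-- A probability vector: nonnegative entries summing to 1. -/
def IsProbVec {ι : Type*} [Fintype ι] (p : ι → ℝ) : Prop :=
  (∀ i, 0 ≤ p i) ∧ ∑ i, p i = 1

/-- A bistochastic (doubly stochastic) matrix: nonnegative entries,
every row and every column sums to 1. -/
def IsBistochastic {d : ℕ} (Λ : Matrix (Fin d) (Fin d) ℝ) : Prop :=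
  (∀ i j, 0 ≤ Λ i j) ∧ (∀ i, ∑ j, Λ i j = 1) ∧ (∀ j, ∑ i, Λ i j = 1)

section HLPaux
attribute [local instance] Classical.propDecidable

variable {d : ℕ}

/-- partial sums of the first `m` coordinates -/
noncomputable def psumHLP (p : Fin d → ℝ) (m : ℕ) : ℝ :=
  ∑ i ∈ Finset.univ.filter (fun i : Fin d => (i : ℕ) < m), p i

lemma sum_le_sum_pairs (p : Fin d → ℝ) (A B : Finset (Fin d))
    (hcard : A.card = B.card) (h : ∀ a ∈ A, ∀ b ∈ B, p a ≤ p b) :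
    ∑ i ∈ A, p i ≤ ∑ i ∈ B, p i := by
  rcases B.eq_empty_or_nonempty with hB | hB
  · have : A = ∅ := Finset.card_eq_zero.1 (by simp [hcard, hB])
    simp [this, hB]
  · set c := B.inf' hB p with hc
    calc ∑ i ∈ A, p i ≤ ∑ _i ∈ A, c :=
          Finset.sum_le_sum fun a ha => Finset.le_inf' hB p fun b hb => h a ha b hb
      _ = B.card • c := by rw [Finset.sum_const, hcard]
      _ ≤ ∑ i ∈ B, p i := Finset.card_nsmul_le_sum B p c fun b hb => Finset.inf'_le p hb

lemma sum_le_topk (p : Fin d → ℝ) (s t : Finset (Fin d)) (hst : t.card = s.card)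
    (htop : ∀ i ∈ s, ∀ i' ∉ s, p i' ≤ p i) : ∑ i ∈ t, p i ≤ ∑ i ∈ s, p i := by
  have h1 : (t \ s).card = (s \ t).card := by
    have e1 := Finset.card_sdiff_add_card_inter t s
    have e2 := Finset.card_sdiff_add_card_inter s t
    rw [Finset.inter_comm] at e2
    omega
  have h2 := sum_le_sum_pairs p (t \ s) (s \ t) h1
    (fun a ha b hb => htop b (Finset.mem_sdiff.1 hb).1 a (Finset.mem_sdiff.1 ha).2)
  have e1 : ∑ i ∈ t \ s, p i + ∑ i ∈ t ∩ s, p i = ∑ i ∈ t, p i := by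
    rw [← Finset.sdiff_inter_self_left t s]
    exact Finset.sum_sdiff Finset.inter_subset_left
  have e2 : ∑ i ∈ s \ t, p i + ∑ i ∈ s ∩ t, p i = ∑ i ∈ s, p i := by
    rw [← Finset.sdiff_inter_self_left s t]
    exact Finset.sum_sdiff Finset.inter_subset_left
  have e3 : ∑ i ∈ t ∩ s, p i = ∑ i ∈ s ∩ t, p i := by rw [Finset.inter_comm]
  linarith

lemma bddAbove_sumLargestSet (p : Fin d → ℝ) (k : ℕ) :
    BddAbove {x : ℝ | ∃ s : Finset (Fin d), s.card = k ∧ ∑ i ∈ s, p i = x} := by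
  apply Set.Finite.bddAbove
  apply Set.Finite.subset (Set.finite_range fun s : Finset (Fin d) => ∑ i ∈ s, p i)
  rintro x ⟨s, -, rfl⟩
  exact ⟨s, rfl⟩

lemma le_sumLargest (p : Fin d → ℝ) {k : ℕ} {s : Finset (Fin d)} (hs : s.card = k) :
    ∑ i ∈ s, p i ≤ sumLargest p k :=
  le_csSup (bddAbove_sumLargestSet p k) ⟨s, hs, rfl⟩

lemma card_filter_lt {k : ℕ} (hk : k ≤ d) :
    (Finset.univ.filter fun i : Fin d => (i : ℕ) < k).card = k := by
  have : (Finset.univ.filter fun i : Fin d => (i : ℕ) < k) =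
      (Finset.univ : Finset (Fin k)).map
        ⟨fun a : Fin k => (⟨(a : ℕ), lt_of_lt_of_le a.isLt hk⟩ : Fin d),
         by intro x y hxy; simpa [Fin.ext_iff] using hxy⟩ := by
    ext i
    simp only [Finset.mem_filter, Finset.mem_univ, true_and, Finset.mem_map,
      Function.Embedding.coeFn_mk]
    constructor
    · intro hi; exact ⟨⟨(i : ℕ), hi⟩, Fin.ext rfl⟩
    · rintro ⟨a, -, rfl⟩; exact a.isLt
  rw [this, Finset.card_map, Finset.card_univ, Fintype.card_fin]

lemma sumLargest_le (p : Fin d → ℝ) {k : ℕ} (hk : k ≤ d) (a : ℝ)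
    (h : ∀ s : Finset (Fin d), s.card = k → ∑ i ∈ s, p i ≤ a) : sumLargest p k ≤ a := by
  refine csSup_le ⟨_, Finset.univ.filter (fun i : Fin d => (i : ℕ) < k),
    card_filter_lt hk, rfl⟩ ?_
  rintro x ⟨s, hs, rfl⟩
  exact h s hs

lemma sumLargest_eq_topk (p : Fin d → ℝ) {k : ℕ} (hk : k ≤ d) {s : Finset (Fin d)}
    (hs : s.card = k) (htop : ∀ i ∈ s, ∀ i' ∉ s, p i' ≤ p i) :
    sumLargest p k = ∑ i ∈ s, p i := by
  refine le_antisymm (sumLargest_le p hk _ ?_) (le_sumLargest p hs)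
  intro t ht
  exact sum_le_topk p s t (ht.trans hs.symm) htop

lemma exists_antitone_perm (p : Fin d → ℝ) : ∃ σ : Equiv.Perm (Fin d), Antitone (p ∘ σ) := by
  refine ⟨Tuple.sort (fun i => -p i), ?_⟩
  have h := Tuple.monotone_sort (fun i => -p i)
  intro a b hab
  have := h hab
  simp only [Function.comp_apply] at this ⊢
  linarith

lemma topk_image {p : Fin d → ℝ} {σ : Equiv.Perm (Fin d)} (hσ : Antitone (p ∘ σ)) (k : ℕ) :
    ∀ i ∈ (Finset.univ.filter fun a : Fin d => (a : ℕ) < k).image σ,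
      ∀ i' ∉ (Finset.univ.filter fun a : Fin d => (a : ℕ) < k).image σ, p i' ≤ p i := by
  intro i hi i' hi'
  obtain ⟨a, ha, rfl⟩ := Finset.mem_image.1 hi
  have ha' : (a : ℕ) < k := (Finset.mem_filter.1 ha).2
  have hb : ¬ ((σ.symm i' : ℕ) < k) := by
    intro hb
    exact hi' (Finset.mem_image.2 ⟨σ.symm i', Finset.mem_filter.2 ⟨Finset.mem_univ _, hb⟩,
      σ.apply_symm_apply i'⟩)
  have hab : a ≤ σ.symm i' := by
    rw [Fin.le_def]; omega
  have := hσ hab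
  simpa [σ.apply_symm_apply] using this

lemma sumLargest_sorted (p : Fin d → ℝ) {σ : Equiv.Perm (Fin d)} (hσ : Antitone (p ∘ σ))
    {k : ℕ} (hk : k ≤ d) :
    sumLargest p k = ∑ a ∈ Finset.univ.filter (fun a : Fin d => (a : ℕ) < k), p (σ a) := by
  have hcard : ((Finset.univ.filter fun a : Fin d => (a : ℕ) < k).image σ).card = k := by
    rw [Finset.card_image_of_injective _ σ.injective, card_filter_lt hk]
  rw [sumLargest_eq_topk p hk hcard (topk_image hσ k),
    Finset.sum_image (fun x _ y _ h => σ.injective h)]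

lemma isBistochastic_one : IsBistochastic (1 : Matrix (Fin d) (Fin d) ℝ) := by
  refine ⟨fun i j => ?_, fun i => ?_, fun j => ?_⟩
  · rw [Matrix.one_apply]; split <;> norm_num
  · simp [Matrix.one_apply]
  · simp [Matrix.one_apply]

lemma IsBistochastic.mul {M N : Matrix (Fin d) (Fin d) ℝ} (hM : IsBistochastic M)
    (hN : IsBistochastic N) : IsBistochastic (M * N) := by
  refine ⟨fun i j => ?_, fun i => ?_, fun j => ?_⟩
  · rw [Matrix.mul_apply]
    exact Finset.sum_nonneg fun l _ => mul_nonneg (hM.1 _ _) (hN.1 _ _)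
  · simp only [Matrix.mul_apply]
    rw [Finset.sum_comm]
    simp [← Finset.mul_sum, hN.2.1, hM.2.1]
  · simp only [Matrix.mul_apply]
    rw [Finset.sum_comm]
    simp [← Finset.sum_mul, hM.2.2, hN.2.2]

lemma psumHLP_zero (p : Fin d → ℝ) : psumHLP p 0 = 0 := by simp [psumHLP]

lemma psumHLP_succ (p : Fin d → ℝ) {m : ℕ} (hm : m < d) :
    psumHLP p (m + 1) = psumHLP p m + p ⟨m, hm⟩ := by
  unfold psumHLP
  have : Finset.univ.filter (fun i : Fin d => (i : ℕ) < m + 1) =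
      insert ⟨m, hm⟩ (Finset.univ.filter (fun i : Fin d => (i : ℕ) < m)) := by
    ext i
    simp only [Finset.mem_filter, Finset.mem_univ, true_and, Finset.mem_insert, Fin.ext_iff]
    omega
  rw [this, Finset.sum_insert (by simp)]
  ring

lemma Ttransform (p : Fin d → ℝ) (j k : Fin d) (hjk : j ≠ k) (θ δ : ℝ)
    (hθ0 : 0 ≤ θ) (hθ1 : θ ≤ 1) (hδ : θ * (p j - p k) = δ) :
    ∃ T : Matrix (Fin d) (Fin d) ℝ, IsBistochastic T ∧
      T.mulVec p = fun i => p i + (if i = j then -δ else 0) + (if i = k then δ else 0) := by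
  set sw := Equiv.swap j k with hsw
  refine ⟨fun a b => (1 - θ) * (if a = b then 1 else 0) + θ * (if b = sw a then 1 else 0),
    ⟨fun a b => ?_, fun a => ?_, fun b => ?_⟩, ?_⟩
  · have h1 : (0:ℝ) ≤ if a = b then (1:ℝ) else 0 := by split <;> norm_num
    have h2 : (0:ℝ) ≤ if b = sw a then (1:ℝ) else 0 := by split <;> norm_num
    have : (0:ℝ) ≤ 1 - θ := by linarith
    positivity
  · rw [Finset.sum_add_distrib, ← Finset.mul_sum, ← Finset.mul_sum]
    rw [Finset.sum_ite_eq univ a (fun _ => (1:ℝ)), Finset.sum_ite_eq' univ (sw a) (fun _ => (1:ℝ))]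
    simp
  · rw [Finset.sum_add_distrib, ← Finset.mul_sum, ← Finset.mul_sum]
    have e1 : ∑ a, (if a = b then (1:ℝ) else 0) = 1 := by
      rw [Finset.sum_ite_eq' univ b (fun _ => (1:ℝ))]; simp
    have e2 : ∑ a, (if b = sw a then (1:ℝ) else 0) = 1 := by
      have : ∀ a, (b = sw a) = (a = sw b) := by
        intro a
        simp only [eq_iff_iff]
        constructor
        · rintro rfl; rw [hsw, Equiv.swap_apply_self]
        · rintro rfl; rw [hsw, Equiv.swap_apply_self]
      simp only [this]
      rw [Finset.sum_ite_eq' univ (sw b) (fun _ => (1:ℝ))]; simp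
    rw [e1, e2]; ring
  · funext a
    have expand : (∑ b, ((1 - θ) * (if a = b then (1:ℝ) else 0)
          + θ * (if b = sw a then 1 else 0)) * p b)
        = (1 - θ) * p a + θ * p (sw a) := by
      have e1 : ∀ b, ((1 - θ) * (if a = b then (1:ℝ) else 0) + θ * (if b = sw a then 1 else 0)) * p b
          = (1 - θ) * (if a = b then p b else 0) + θ * (if b = sw a then p b else 0) := by
        intro b; split <;> split <;> ring
      rw [Finset.sum_congr rfl (fun b _ => e1 b), Finset.sum_add_distrib,
        ← Finset.mul_sum, ← Finset.mul_sum,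
        Finset.sum_ite_eq univ a p, Finset.sum_ite_eq' univ (sw a) p]
      simp
    show (∑ b, _ * p b) = _
    rw [expand]
    rcases eq_or_ne a j with rfl | haj
    · rw [if_pos rfl, if_neg hjk, hsw, Equiv.swap_apply_left]
      linarith
    · rcases eq_or_ne a k with rfl | hak
      · rw [if_neg haj, if_pos rfl, hsw, Equiv.swap_apply_right]
        linarith
      · rw [if_neg haj, if_neg hak, hsw, Equiv.swap_apply_of_ne_of_ne haj hak]
        ring

lemma dot_le_topk (p : Fin d → ℝ) (s' : Finset (Fin d)) (k : ℕ)
    (hcard : s'.card = k) (hne : s'.Nonempty)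
    (t : Fin d → ℝ) (h0 : ∀ j, 0 ≤ t j) (h1 : ∀ j, t j ≤ 1)
    (htop : ∀ i ∈ s', ∀ i' ∉ s', p i' ≤ p i)
    (hsumt : ∑ j, t j = (k : ℝ)) :
    ∑ j, t j * p j ≤ ∑ i ∈ s', p i := by
  set c := s'.inf' hne p with hc
  have e1 : ∑ j ∈ s', (t j - 1) * p j ≤ ∑ j ∈ s', (t j - 1) * c := by
    refine Finset.sum_le_sum fun i hi => ?_
    have h2 : t i - 1 ≤ 0 := by linarith [h1 i]
    have h3 : c ≤ p i := Finset.inf'_le p hi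
    nlinarith
  have e2 : ∑ j ∈ s'ᶜ, t j * p j ≤ ∑ j ∈ s'ᶜ, t j * c := by
    refine Finset.sum_le_sum fun i hi => ?_
    have h3 : p i ≤ c := Finset.le_inf' hne p fun b hb =>
      htop b hb i (by simpa using hi)
    nlinarith [h0 i]
  have A : ∑ j ∈ s', (t j - 1) * p j = ∑ j ∈ s', t j * p j - ∑ j ∈ s', p j := by
    rw [← Finset.sum_sub_distrib]
    exact Finset.sum_congr rfl fun i _ => by ring
  have B : ∑ j ∈ s', (t j - 1) * c = ∑ j ∈ s', t j * c - (k : ℝ) * c := by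
    have h : ∀ i ∈ s', (t i - 1) * c = t i * c - c := fun i _ => by ring
    rw [Finset.sum_congr rfl h, Finset.sum_sub_distrib, Finset.sum_const, hcard,
      nsmul_eq_mul]
  have C : ∑ j ∈ s', t j * c + ∑ j ∈ s'ᶜ, t j * c = (k : ℝ) * c := by
    rw [Finset.sum_add_sum_compl, ← Finset.sum_mul, hsumt]
  have D : ∑ j ∈ s', t j * p j + ∑ j ∈ s'ᶜ, t j * p j = ∑ j, t j * p j :=
    Finset.sum_add_sum_compl s' _
  linarith

set_option maxHeartbeats 2000000 in
lemma hlp_core : ∀ N : ℕ, ∀ p q : Fin d → ℝ,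
    (univ.filter fun i => p i ≠ q i).card ≤ N →
    Antitone p → Antitone q →
    (∑ i, p i = ∑ i, q i) →
    (∀ m : ℕ, m ≤ d → psumHLP q m ≤ psumHLP p m) →
    ∃ Λ : Matrix (Fin d) (Fin d) ℝ, IsBistochastic Λ ∧ Λ.mulVec p = q := by
  intro N
  induction N with
  | zero =>
    intro p q hcard _ _ _ _
    have hpq : p = q := by
      funext i
      by_contra hne
      have hmem : i ∈ univ.filter fun i => p i ≠ q i := mem_filter.2 ⟨mem_univ _, hne⟩
      have := Finset.card_pos.2 ⟨i, hmem⟩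
      omega
    exact ⟨1, isBistochastic_one, by rw [Matrix.one_mulVec, hpq]⟩
  | succ N IH =>
    intro p q hcard hp hq hsum hmaj
    by_cases hpq : p = q
    · exact ⟨1, isBistochastic_one, by rw [Matrix.one_mulVec, hpq]⟩
    have hAne : (univ.filter fun i => q i < p i).Nonempty := by
      by_contra hA
      rw [Finset.not_nonempty_iff_eq_empty] at hA
      have hle : ∀ i ∈ univ, p i ≤ q i := by
        intro i _
        by_contra h
        have hmem : i ∈ univ.filter fun i => q i < p i :=
          mem_filter.2 ⟨mem_univ _, not_le.1 h⟩
        simp [hA] at hmem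
      obtain ⟨i₀, hi₀⟩ : ∃ i, p i ≠ q i := by
        by_contra h; push_neg at h; exact hpq (funext h)
      have : ∑ i, p i < ∑ i, q i :=
        Finset.sum_lt_sum hle ⟨i₀, mem_univ _, lt_of_le_of_ne (hle i₀ (mem_univ _)) hi₀⟩
      linarith
    set j := (univ.filter fun i => q i < p i).max' hAne with hjdef
    have hj : q j < p j := (mem_filter.1 ((univ.filter fun i => q i < p i).max'_mem hAne)).2
    have hjmax : ∀ i, j < i → p i ≤ q i := by
      intro i hi
      by_contra h
      have : i ≤ j := Finset.le_max' (univ.filter fun i => q i < p i) i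
        (mem_filter.2 ⟨mem_univ _, not_le.1 h⟩)
      exact absurd hi (not_lt.2 this)
    have hjd : (j : ℕ) < d := j.isLt
    have hslack : p j - q j ≤ psumHLP p ((j:ℕ) + 1) - psumHLP q ((j:ℕ) + 1) := by
      rw [psumHLP_succ p hjd, psumHLP_succ q hjd]
      have h1 := hmaj (j:ℕ) (le_of_lt hjd)
      have h2 : (⟨(j:ℕ), hjd⟩ : Fin d) = j := by simp
      rw [h2]
      linarith
    have hdiff : ∀ (r s : Fin d → ℝ) (m : ℕ), psumHLP r m - psumHLP s m
        = ∑ i ∈ univ.filter (fun i : Fin d => (i:ℕ) < m), (r i - s i) := by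
      intro r s m; rw [Finset.sum_sub_distrib]; rfl
    have hBne : (univ.filter fun i => j < i ∧ p i < q i).Nonempty := by
      by_contra hB
      rw [Finset.not_nonempty_iff_eq_empty] at hB
      have hgt : ∀ i : Fin d, j < i → p i = q i := by
        intro i hi
        have h1 := hjmax i hi
        have h2 : ¬ (p i < q i) := by
          intro h
          have hmem : i ∈ univ.filter fun i => j < i ∧ p i < q i :=
            mem_filter.2 ⟨mem_univ _, hi, h⟩
          simp [hB] at hmem
        linarith
      have heq : ∑ i ∈ univ.filter (fun i : Fin d => (i:ℕ) < (j:ℕ)+1), (p i - q i)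
          = ∑ i, (p i - q i) := by
        apply Finset.sum_subset (Finset.filter_subset _ _)
        intro i _ hi
        have h1 : ¬ ((i:ℕ) < (j:ℕ)+1) := by simpa using hi
        have h2 : j < i := by rw [Fin.lt_def]; omega
        rw [hgt i h2]; ring
      have htot : ∑ i : Fin d, (p i - q i) = 0 := by rw [Finset.sum_sub_distrib]; linarith
      have := hdiff p q ((j:ℕ)+1)
      rw [heq, htot] at this
      linarith
    set k := (univ.filter fun i => j < i ∧ p i < q i).min' hBne with hkdef
    have hkmem := (univ.filter fun i => j < i ∧ p i < q i).min'_mem hBne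
    have hjk : j < k := (mem_filter.1 hkmem).2.1
    have hk : p k < q k := (mem_filter.1 hkmem).2.2
    have hmid : ∀ i, j < i → i < k → p i = q i := by
      intro i h1 h2
      have hle := hjmax i h1
      have hnlt : ¬ (p i < q i) := by
        intro h
        have := Finset.min'_le (univ.filter fun i => j < i ∧ p i < q i) i
          (mem_filter.2 ⟨mem_univ _, h1, h⟩)
        exact absurd h2 (not_lt.2 this)
      linarith
    have hqkj : q k ≤ q j := hq hjk.le
    have hpkj : p k < p j := by linarith
    set δ := min (p j - q j) (q k - p k) with hδdef
    have hδpos : 0 < δ := lt_min (by linarith) (by linarith)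
    have hδ1 : δ ≤ p j - q j := min_le_left _ _
    have hδ2 : δ ≤ q k - p k := min_le_right _ _
    set θ := δ / (p j - p k) with hθdef
    have hθ0 : 0 ≤ θ := le_of_lt (div_pos hδpos (by linarith))
    have hθ1 : θ ≤ 1 := by
      rw [hθdef, div_le_one (by linarith)]
      linarith
    have hθδ : θ * (p j - p k) = δ := by
      rw [hθdef]
      exact div_mul_cancel₀ δ (by linarith : p j - p k ≠ 0)
    obtain ⟨T, hT, hTp⟩ := Ttransform p j k (ne_of_lt hjk) θ δ hθ0 hθ1 hθδ
    set p'' : Fin d → ℝ :=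
      fun i => p i + (if i = j then -δ else 0) + (if i = k then δ else 0) with hp''def
    have hTp' : T.mulVec p = p'' := hTp
    have hjkne : j ≠ k := ne_of_lt hjk
    have hp''j : p'' j = p j - δ := by
      rw [hp''def]; simp [hjkne]; try ring
    have hp''k : p'' k = p k + δ := by
      rw [hp''def]; simp [Ne.symm hjkne]; try ring
    have hp''o : ∀ i, i ≠ j → i ≠ k → p'' i = p i := by
      intro i h1 h2; rw [hp''def]; simp [h1, h2]; try ring
    have hp'' : Antitone p'' := by
      intro a b hab
      rcases eq_or_lt_of_le hab with rfl | hab'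
      · exact le_refl _
      rcases eq_or_ne b j with rfl | hbj
      · have haj : a ≠ j := ne_of_lt hab'
        have hak : a ≠ k := ne_of_lt (lt_trans hab' hjk)
        rw [hp''j, hp''o a haj hak]
        have := hp (le_of_lt hab')
        linarith
      rcases eq_or_ne b k with rfl | hbk
      · rw [hp''k]
        rcases eq_or_ne a j with rfl | haj
        · rw [hp''j]; linarith
        · have hak : a ≠ k := ne_of_lt hab'
          rw [hp''o a haj hak]
          rcases lt_or_ge a j with haj' | hja
          · have := hp (le_of_lt haj')
            linarith
          · have hja' : j < a := lt_of_le_of_ne hja (Ne.symm haj)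
            have h1 := hmid a hja' hab'
            have h2 := hq (le_of_lt hab')
            linarith
      rcases eq_or_ne a j with rfl | haj
      · rw [hp''j, hp''o b hbj hbk]
        rcases lt_or_ge b k with hbk' | hkb
        · have h1 := hmid b hab' hbk'
          have h2 := hq (le_of_lt hab')
          linarith
        · have := hp hkb
          linarith
      rcases eq_or_ne a k with rfl | hak
      · rw [hp''k, hp''o b hbj hbk]
        have := hp (le_of_lt hab')
        linarith
      · rw [hp''o a haj hak, hp''o b hbj hbk]
        exact hp hab
    have hsum'' : ∀ s : Finset (Fin d), ∑ i ∈ s, p'' i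
        = ∑ i ∈ s, p i + (if j ∈ s then -δ else 0) + (if k ∈ s then δ else 0) := by
      intro s
      rw [hp''def]
      rw [Finset.sum_add_distrib, Finset.sum_add_distrib,
        Finset.sum_ite_eq' s j (fun _ => -δ), Finset.sum_ite_eq' s k (fun _ => δ)]
    have htot'' : ∑ i, p'' i = ∑ i, q i := by
      rw [hsum'' univ]
      simp only [Finset.mem_univ, if_pos]
      linarith
    have hmaj'' : ∀ m : ℕ, m ≤ d → psumHLP q m ≤ psumHLP p'' m := by
      intro m hm
      have hkj : (j:ℕ) < (k:ℕ) := hjk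
      have hps : psumHLP p'' m = psumHLP p m
          + (if (j:ℕ) < m then -δ else 0) + (if (k:ℕ) < m then δ else 0) := by
        show (∑ i ∈ univ.filter (fun i : Fin d => (i:ℕ) < m), p'' i) = _
        rw [hsum'']
        simp only [Finset.mem_filter, Finset.mem_univ, true_and]
        rfl
      rcases le_or_gt m (j:ℕ) with hmj | hjm
      · rw [hps, if_neg (by omega), if_neg (by omega)]
        have := hmaj m hm; linarith
      rcases le_or_gt m (k:ℕ) with hmk | hkm
      · rw [hps, if_pos hjm, if_neg (by omega)]
        have heq : ∑ i ∈ univ.filter (fun i : Fin d => (i:ℕ) < (j:ℕ)+1), (p i - q i)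
            = ∑ i ∈ univ.filter (fun i : Fin d => (i:ℕ) < m), (p i - q i) := by
          apply Finset.sum_subset
          · intro i hi; simp only [mem_filter, mem_univ, true_and] at hi ⊢; omega
          · intro i hi hni
            simp only [mem_filter, mem_univ, true_and] at hi hni
            have h1 : j < i := by rw [Fin.lt_def]; omega
            have h2 : i < k := by rw [Fin.lt_def]; omega
            rw [hmid i h1 h2]; ring
        have e : psumHLP p m - psumHLP q m
            = psumHLP p ((j:ℕ)+1) - psumHLP q ((j:ℕ)+1) := by
          rw [hdiff p q, hdiff p q, heq]
        linarith
      · rw [hps, if_pos (by omega), if_pos hkm]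
        have := hmaj m hm; linarith
    have hUsub : (univ.filter fun i => p'' i ≠ q i) ⊆ (univ.filter fun i => p i ≠ q i) := by
      intro i hi
      rw [mem_filter] at hi ⊢
      refine ⟨mem_univ _, ?_⟩
      rcases eq_or_ne i j with rfl | hij
      · exact ne_of_gt hj
      rcases eq_or_ne i k with rfl | hik
      · exact ne_of_lt hk
      · rw [← hp''o i hij hik]; exact hi.2
    have hUss : ∃ i₀, i₀ ∈ (univ.filter fun i => p i ≠ q i)
        ∧ i₀ ∉ (univ.filter fun i => p'' i ≠ q i) := by
      rcases le_total (p j - q j) (q k - p k) with hc | hc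
      · refine ⟨j, mem_filter.2 ⟨mem_univ _, ne_of_gt hj⟩, ?_⟩
        have hj0 : p'' j = q j := by rw [hp''j, hδdef, min_eq_left hc]; ring
        simp [hj0]
      · refine ⟨k, mem_filter.2 ⟨mem_univ _, ne_of_lt hk⟩, ?_⟩
        have hk0 : p'' k = q k := by rw [hp''k, hδdef, min_eq_right hc]; ring
        simp [hk0]
    obtain ⟨i₀, hi₀U, hi₀U''⟩ := hUss
    have hcard'' : (univ.filter fun i => p'' i ≠ q i).card ≤ N := by
      have hss : (univ.filter fun i => p'' i ≠ q i) ⊂ (univ.filter fun i => p i ≠ q i) :=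
        (Finset.ssubset_iff_of_subset hUsub).2 ⟨i₀, hi₀U, hi₀U''⟩
      have := Finset.card_lt_card hss
      omega
    obtain ⟨Λ', hΛ', hΛ'p⟩ := IH p'' q hcard'' hp'' hq (htot'') hmaj''
    refine ⟨Λ' * T, IsBistochastic.mul hΛ' hT, ?_⟩
    rw [← Matrix.mulVec_mulVec, hTp', hΛ'p]

end HLPaux

/-- Hardy–Littlewood–Pólya: there exists a bistochastic matrix mapping `p` to `q`
iff `p` majorises `q`. -/
theorem hardy_littlewood_polya {d : ℕ} (p q : Fin d → ℝ)
    (hp : IsProbVec p) (hq : IsProbVec q) :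
    (∃ Λ : Matrix (Fin d) (Fin d) ℝ, IsBistochastic Λ ∧ Λ.mulVec p = q) ↔
      (∀ k : ℕ, 1 ≤ k → k ≤ d → sumLargest q k ≤ sumLargest p k) := by
  classical
  constructor
  · rintro ⟨Λ, hΛ, hΛp⟩ k hk1 hkd
    obtain ⟨σ, hσ⟩ := exists_antitone_perm p
    set s' := (Finset.univ.filter fun a : Fin d => (a : ℕ) < k).image σ with hs'def
    have hs'card : s'.card = k := by
      rw [hs'def, Finset.card_image_of_injective _ σ.injective, card_filter_lt hkd]
    have hs'ne : s'.Nonempty := Finset.card_pos.1 (by omega)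
    have htop : ∀ i ∈ s', ∀ i' ∉ s', p i' ≤ p i := topk_image hσ k
    refine sumLargest_le q hkd _ ?_
    rintro s hs
    have step1 : ∑ i ∈ s, q i = ∑ j, (∑ i ∈ s, Λ i j) * p j := by
      calc ∑ i ∈ s, q i = ∑ i ∈ s, ∑ j, Λ i j * p j := by
            refine Finset.sum_congr rfl fun i _ => ?_
            rw [← hΛp]
            rfl
        _ = ∑ j, ∑ i ∈ s, Λ i j * p j := Finset.sum_comm
        _ = ∑ j, (∑ i ∈ s, Λ i j) * p j := by
            refine Finset.sum_congr rfl fun j _ => (Finset.sum_mul ..).symm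
    have ht0 : ∀ j, 0 ≤ ∑ i ∈ s, Λ i j := fun j => Finset.sum_nonneg fun i _ => hΛ.1 i j
    have ht1 : ∀ j, ∑ i ∈ s, Λ i j ≤ 1 := by
      intro j
      calc ∑ i ∈ s, Λ i j ≤ ∑ i, Λ i j :=
          Finset.sum_le_sum_of_subset_of_nonneg (Finset.subset_univ s) (fun i _ _ => hΛ.1 i j)
        _ = 1 := hΛ.2.2 j
    have hts : ∑ j, ∑ i ∈ s, Λ i j = (k : ℝ) := by
      rw [Finset.sum_comm]
      have h : ∀ i ∈ s, ∑ j, Λ i j = 1 := fun i _ => hΛ.2.1 i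
      rw [Finset.sum_congr rfl h, Finset.sum_const, hs, nsmul_eq_mul, mul_one]
    calc ∑ i ∈ s, q i = ∑ j, (∑ i ∈ s, Λ i j) * p j := step1
      _ ≤ ∑ i ∈ s', p i := dot_le_topk p s' k hs'card hs'ne _ ht0 ht1 htop hts
      _ ≤ sumLargest p k := le_sumLargest p hs'card
  · intro H
    obtain ⟨σ, hσ⟩ := exists_antitone_perm p
    obtain ⟨τ, hτ⟩ := exists_antitone_perm q
    have htot : ∑ i, (p ∘ σ) i = ∑ i, (q ∘ τ) i := by
      simp only [Function.comp_apply]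
      rw [Equiv.sum_comp σ p, Equiv.sum_comp τ q, hp.2, hq.2]
    have hmaj' : ∀ m : ℕ, m ≤ d → psumHLP (q ∘ τ) m ≤ psumHLP (p ∘ σ) m := by
      intro m hm
      rcases Nat.eq_zero_or_pos m with rfl | hm1
      · rw [psumHLP_zero, psumHLP_zero]
      · have hqp := H m hm1 hm
        have e1 : sumLargest p m = psumHLP (p ∘ σ) m := sumLargest_sorted p hσ hm
        have e2 : sumLargest q m = psumHLP (q ∘ τ) m := sumLargest_sorted q hτ hm
        rw [← e1, ← e2]
        exact hqp
    obtain ⟨Λ', hΛ', hΛ'p⟩ := hlp_core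
      ((Finset.univ.filter fun i => (p ∘ σ) i ≠ (q ∘ τ) i).card) (p ∘ σ) (q ∘ τ)
      le_rfl hσ hτ htot hmaj'
    refine ⟨fun a b => Λ' (τ.symm a) (σ.symm b), ⟨?_, ?_, ?_⟩, ?_⟩
    · intro a b; exact hΛ'.1 _ _
    · intro a
      rw [Equiv.sum_comp σ.symm (fun b => Λ' (τ.symm a) b)]
      exact hΛ'.2.1 _
    · intro b
      rw [Equiv.sum_comp τ.symm (fun a => Λ' a (σ.symm b))]
      exact hΛ'.2.2 _
    · funext a
      show ∑ b, Λ' (τ.symm a) (σ.symm b) * p b = q a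
      have e2 : ∑ i, Λ' (τ.symm a) i * (p ∘ σ) i = q a := by
        have h := congrFun hΛ'p (τ.symm a)
        simpa [Matrix.mulVec, dotProduct, Equiv.apply_symm_apply] using h
      calc ∑ b, Λ' (τ.symm a) (σ.symm b) * p b
          = ∑ i, Λ' (τ.symm a) (σ.symm (σ i)) * p (σ i) :=
            (Equiv.sum_comp σ (fun b => Λ' (τ.symm a) (σ.symm b) * p b)).symm
        _ = ∑ i, Λ' (τ.symm a) i * (p ∘ σ) i := by
            refine Finset.sum_congr rfl fun i _ => by simp
        _ = q a := e2
end

section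
/- The set of d-dimensional probability vectors sorted in non-increasing order forms a lattice under majorisation: for any sorted p and q, the vector r defined by cumulative sums R_k = max(P_k, Q_k) after the 'flattening' correction procedure is the least upper bound (join), i.e., r ≻ p, r ≻ q, and any sorted s with s ≻ p and s ≻ q satisfies s ≻ r. -/
open Finset

/-!
For sorted vectors, majorisation is the pointwise comparison of partial sums, and the partial
sums of a sorted nonnegative vector form a concave sequence. Hence the join is obtained from the
least concave majorant `R` of `k ↦ max (P_k, Q_k)` on `{0, …, d}` (which the paper's flattening
procedure computes): `R` is concave, nondecreasing, `R 0 = 0` and `R d = 1`, so its increments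
form a sorted probability vector `r` with partial sums `R`; and any sorted upper bound `s` of `p`
and `q` has concave partial sums dominating `max (P, Q)`, hence dominating `R`.
-/

namespace Majorization

variable {d : ℕ}

def zeroExtend (p : Fin d → ℝ) (j : ℕ) : ℝ :=
  if h : j < d then p ⟨j, h⟩ else 0

/-- The paper's `P_k`, with `p` extended by zero beyond `d`. -/
def partialSum (p : Fin d → ℝ) (k : ℕ) : ℝ :=
  ∑ j ∈ range k, zeroExtend p j

@[simp]
lemma partialSum_zero (p : Fin d → ℝ) : partialSum p 0 = 0 := by
  simp [partialSum]

lemma partialSum_succ_sub (p : Fin d → ℝ) (k : ℕ) :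
    partialSum p (k + 1) - partialSum p k = zeroExtend p k := by
  simp [partialSum, sum_range_succ]

lemma partialSum_eq_sum_castLE (p : Fin d → ℝ) {k : ℕ} (hk : k ≤ d) :
    partialSum p k = ∑ j : Fin k, p (Fin.castLE hk j) := by
  rw [partialSum, ← Fin.sum_univ_eq_sum_range]
  refine sum_congr rfl fun j _ => ?_
  simp [zeroExtend, j.isLt.trans_le hk, Fin.castLE]

lemma partialSum_of_le (p : Fin d → ℝ) {k : ℕ} (hk : d ≤ k) :
    partialSum p k = ∑ i, p i := by
  have hd : partialSum p d = ∑ i, p i := by simp [partialSum_eq_sum_castLE p le_rfl]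
  rw [← hd, partialSum, partialSum]
  refine (sum_subset (range_subset_range.2 hk) fun j _ hj => ?_).symm
  simp_all [zeroExtend]

lemma zeroExtend_nonneg {p : Fin d → ℝ} (hp : ∀ i, 0 ≤ p i) (j : ℕ) :
    0 ≤ zeroExtend p j := by
  unfold zeroExtend
  split_ifs
  exacts [hp _, le_rfl]

lemma antitone_zeroExtend {p : Fin d → ℝ} (hp : Antitone p) (h0 : ∀ i, 0 ≤ p i) :
    Antitone (zeroExtend p) := by
  refine antitone_nat_of_succ_le fun j => ?_
  by_cases hj : j + 1 < d
  · simp only [zeroExtend, hj, j.lt_succ_self.trans hj, dif_pos]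
    exact hp (Fin.mk_le_mk.2 j.le_succ)
  · simpa [zeroExtend, hj] using zeroExtend_nonneg h0 j

lemma monotone_partialSum {p : Fin d → ℝ} (hp : ∀ i, 0 ≤ p i) : Monotone (partialSum p) :=
  monotone_nat_of_le_succ fun k => by
    linarith [partialSum_succ_sub p k, zeroExtend_nonneg hp k]

lemma val_le_of_strictMono {k : ℕ} {f : Fin k → Fin d} (hf : StrictMono f) (j : Fin k) :
    (j : ℕ) ≤ f j := by
  simpa using card_le_card_of_injOn f (s := Iio j) (t := Iio (f j))
    (fun i hi => by simpa using hf (by simpa using hi)) hf.injective.injOn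

lemma sumLargest_eq_partialSum {p : Fin d → ℝ} (hp : Antitone p) {k : ℕ} (hk : k ≤ d) :
    sumLargest p k = partialSum p k := by
  refine IsGreatest.csSup_eq ⟨⟨univ.map (Fin.castLEEmb hk), by simp, ?_⟩, ?_⟩
  · simp [partialSum_eq_sum_castLE p hk]
  · rintro x ⟨s, hs, rfl⟩
    rw [partialSum_eq_sum_castLE p hk, ← s.map_orderEmbOfFin_univ hs, sum_map]
    exact sum_le_sum fun j _ =>
      hp (Fin.le_def.2 (val_le_of_strictMono (s.orderEmbOfFin hs).strictMono j))

lemma majorizes_iff {p q : Fin d → ℝ} (hp : Antitone p) (hq : Antitone q) :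
    Majorizes p q ↔ ∀ k ≤ d, partialSum q k ≤ partialSum p k := by
  simp only [Majorizes, Fintype.card_fin]
  refine forall₂_congr fun k hk => ?_
  rw [sumLargest_eq_partialSum hp hk, sumLargest_eq_partialSum hq hk]

def IsConcaveMajorant (d : ℕ) (T f : ℕ → ℝ) : Prop :=
  Antitone (fun j => f (j + 1) - f j) ∧ ∀ j ≤ d, T j ≤ f j

/-- Only meaningful for `k ≤ d`; beyond `d` the infimum is over an unbounded set. -/
noncomputable def leastConcaveMajorant (d : ℕ) (T : ℕ → ℝ) (k : ℕ) : ℝ :=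
  sInf ((fun f => f k) '' {f | IsConcaveMajorant d T f})

variable {T : ℕ → ℝ}

lemma isConcaveMajorant_affine {a b : ℝ} (h : ∀ j ≤ d, T j ≤ a + b * j) :
    IsConcaveMajorant d T (fun j => a + b * j) :=
  ⟨fun _ _ _ => le_of_eq (by push_cast; ring), h⟩

lemma IsConcaveMajorant.min {f g : ℕ → ℝ} (hf : IsConcaveMajorant d T f)
    (hg : IsConcaveMajorant d T g) : IsConcaveMajorant d T (fun j => min (f j) (g j)) := by
  refine ⟨antitone_nat_of_succ_le fun j => ?_, fun j hj => le_min (hf.2 j hj) (hg.2 j hj)⟩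
  have hf' := hf.1 j.le_succ
  have hg' := hg.1 j.le_succ
  simp only at hf' hg' ⊢
  rcases le_total (f (j + 1)) (g (j + 1)) with h | h
  · rw [min_eq_left h]
    linarith [min_le_left (f (j + 1 + 1)) (g (j + 1 + 1)), min_le_left (f j) (g j)]
  · rw [min_eq_right h]
    linarith [min_le_right (f (j + 1 + 1)) (g (j + 1 + 1)), min_le_right (f j) (g j)]

lemma exists_forall_abs_le (T : ℕ → ℝ) (d : ℕ) : ∃ M, ∀ j ≤ d, |T j| ≤ M :=
  ⟨∑ j ∈ range (d + 1), |T j|, fun _ hj =>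
    single_le_sum (fun i _ => abs_nonneg (T i)) (mem_range.2 (Nat.lt_succ_of_le hj))⟩

lemma exists_isConcaveMajorant (T : ℕ → ℝ) (d : ℕ) : ∃ f, IsConcaveMajorant d T f := by
  obtain ⟨M, hM⟩ := exists_forall_abs_le T d
  exact ⟨_, isConcaveMajorant_affine (a := M) (b := 0) fun j hj => by
    simpa using (le_abs_self _).trans (hM j hj)⟩

lemma leastConcaveMajorant_le {f : ℕ → ℝ} (hf : IsConcaveMajorant d T f) {k : ℕ}
    (hk : k ≤ d) :
    leastConcaveMajorant d T k ≤ f k :=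
  csInf_le ⟨T k, by rintro _ ⟨g, hg, rfl⟩; exact hg.2 k hk⟩ ⟨f, hf, rfl⟩

lemma le_leastConcaveMajorant_of_forall {x : ℝ} {k : ℕ}
    (h : ∀ f, IsConcaveMajorant d T f → x ≤ f k) : x ≤ leastConcaveMajorant d T k :=
  le_csInf ((exists_isConcaveMajorant T d).elim fun f hf => ⟨f k, f, hf, rfl⟩)
    (by rintro _ ⟨f, hf, rfl⟩; exact h f hf)

lemma le_leastConcaveMajorant {k : ℕ} (hk : k ≤ d) : T k ≤ leastConcaveMajorant d T k :=
  le_leastConcaveMajorant_of_forall fun _ hf => hf.2 k hk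

lemma leastConcaveMajorant_zero : leastConcaveMajorant d T 0 = T 0 := by
  refine le_antisymm ?_ (le_leastConcaveMajorant d.zero_le)
  obtain ⟨M, hM⟩ := exists_forall_abs_le T d
  -- a steep line through `(0, T 0)` dominates `T`
  have hf := isConcaveMajorant_affine (T := T) (a := T 0) (b := 2 * M) fun j hj => by
    rcases j.eq_zero_or_pos with rfl | hj0
    · simp
    · have h1 : (1 : ℝ) ≤ j := by exact_mod_cast hj0
      obtain ⟨-, hTj⟩ := abs_le.1 (hM j hj)
      obtain ⟨hT0, -⟩ := abs_le.1 (hM 0 d.zero_le)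
      nlinarith [mul_le_mul_of_nonneg_left h1 ((abs_nonneg _).trans (hM j hj))]
  simpa using leastConcaveMajorant_le hf d.zero_le

lemma leastConcaveMajorant_self : leastConcaveMajorant d T d = T d := by
  refine le_antisymm ?_ (le_leastConcaveMajorant le_rfl)
  obtain ⟨M, hM⟩ := exists_forall_abs_le T d
  -- a steep line through `(d, T d)` dominates `T`
  have hf := isConcaveMajorant_affine (T := T) (a := T d + 2 * M * d) (b := -(2 * M))
    fun j hj => by
      rcases hj.eq_or_lt with rfl | hjd
      · linarith
      · have h1 : (j : ℝ) + 1 ≤ d := by exact_mod_cast hjd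
        obtain ⟨-, hTj⟩ := abs_le.1 (hM j hj)
        obtain ⟨hTd, -⟩ := abs_le.1 (hM d le_rfl)
        nlinarith [mul_le_mul_of_nonneg_left h1 ((abs_nonneg _).trans (hM j hj))]
  simpa using leastConcaveMajorant_le hf le_rfl

lemma leastConcaveMajorant_succ_sub_le {i j : ℕ} (hij : i ≤ j) (hj : j + 1 ≤ d) :
    leastConcaveMajorant d T (j + 1) - leastConcaveMajorant d T j ≤
      leastConcaveMajorant d T (i + 1) - leastConcaveMajorant d T i := by
  set L := leastConcaveMajorant d T
  have key : ∀ f g, IsConcaveMajorant d T f → IsConcaveMajorant d T g →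
      L (j + 1) + L i ≤ f j + g (i + 1) := by
    intro f g hf hg
    have hfg := hf.min hg
    have := hfg.1 hij
    simp only at this
    linarith [leastConcaveMajorant_le hfg hj,
      leastConcaveMajorant_le hfg (hij.trans j.le_succ |>.trans hj),
      min_le_left (f j) (g j), min_le_right (f (i + 1)) (g (i + 1))]
  have : L (j + 1) + L i - L (i + 1) ≤ L j := le_leastConcaveMajorant_of_forall fun f hf => by
    have : L (j + 1) + L i - f j ≤ L (i + 1) :=
      le_leastConcaveMajorant_of_forall fun g hg => by linarith [key f g hf hg]
    linarith
  linarith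

lemma leastConcaveMajorant_le_succ (hT : ∀ j ≤ d, T j ≤ T d) {k : ℕ} (hk : k + 1 ≤ d) :
    leastConcaveMajorant d T k ≤ leastConcaveMajorant d T (k + 1) :=
  le_leastConcaveMajorant_of_forall fun f hf => by
    rcases le_total (f k) (f (k + 1)) with h | h
    · exact (leastConcaveMajorant_le hf (k.le_succ.trans hk)).trans h
    -- otherwise `f` is non-increasing from `k` on, so the constant `f (k + 1)` is a majorant
    have hanti : AntitoneOn f (Set.Ici k) := antitoneOn_nat_Ici_of_succ_le fun n hn => by
      have := hf.1 hn
      simp only at this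
      linarith
    have hconst := isConcaveMajorant_affine (T := T) (a := f (k + 1)) (b := 0) fun j hj => by
      calc T j ≤ T d := hT j hj
        _ ≤ f d := hf.2 d le_rfl
        _ ≤ f (k + 1) + 0 * j := by
          simpa using hanti (Set.mem_Ici.2 k.le_succ) (Set.mem_Ici.2 (k.le_succ.trans hk)) hk
    simpa using leastConcaveMajorant_le hconst (k.le_succ.trans hk)

lemma partialSum_succ_sub_of_le (R : ℕ → ℝ) {k : ℕ} (hk : k ≤ d) :
    partialSum (fun i : Fin d => R (i + 1) - R i) k = R k - R 0 := by
  rw [partialSum, ← sum_range_sub R k]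
  refine sum_congr rfl fun j hj => ?_
  simp [zeroExtend, (mem_range.1 hj).trans_le hk]

end Majorization

open Majorization

/-- Sorted probability vectors form a lattice under majorisation: any two sorted
probability vectors `p`, `q` have a least upper bound (join) `r`, i.e. a sorted
probability vector with `r ≻ p`, `r ≻ q`, such that every sorted probability vector
`s` with `s ≻ p` and `s ≻ q` satisfies `s ≻ r`. -/
theorem majorization_lattice_join {d : ℕ} (p q : Fin d → ℝ)
    (hp : IsProbVec p) (hq : IsProbVec q)
    (hps : Antitone p) (hqs : Antitone q) :
    ∃ r : Fin d → ℝ, IsProbVec r ∧ Antitone r ∧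
      Majorizes r p ∧ Majorizes r q ∧
      ∀ s : Fin d → ℝ, IsProbVec s → Antitone s →
        Majorizes s p → Majorizes s q → Majorizes s r := by
  set T : ℕ → ℝ := fun k => max (partialSum p k) (partialSum q k)
  set R := leastConcaveMajorant d T
  set r : Fin d → ℝ := fun i => R (i + 1) - R i
  have hT : ∀ j ≤ d, T j ≤ T d := fun j hj =>
    max_le_max (monotone_partialSum hp.1 hj) (monotone_partialSum hq.1 hj)
  have hR : ∀ k ≤ d, partialSum r k = R k := fun k hk => by
    simp [r, partialSum_succ_sub_of_le R hk, R, leastConcaveMajorant_zero, T]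
  have hr : Antitone r := fun a b hab => leastConcaveMajorant_succ_sub_le hab b.isLt
  have hr_prob : IsProbVec r := by
    refine ⟨fun i => sub_nonneg.2 (leastConcaveMajorant_le_succ hT i.isLt), ?_⟩
    rw [← partialSum_of_le r le_rfl, hR d le_rfl]
    exact leastConcaveMajorant_self.trans (by simp [T, partialSum_of_le, hp.2, hq.2])
  refine ⟨r, hr_prob, hr, ?_, ?_, fun s hs hss hsp hsq => ?_⟩
  · refine (majorizes_iff hr hps).2 fun k hk => ?_
    exact (hR k hk).symm ▸ (le_max_left _ _).trans (le_leastConcaveMajorant (T := T) hk)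
  · refine (majorizes_iff hr hqs).2 fun k hk => ?_
    exact (hR k hk).symm ▸ (le_max_right _ _).trans (le_leastConcaveMajorant (T := T) hk)
  rw [majorizes_iff hss hps] at hsp
  rw [majorizes_iff hss hqs] at hsq
  have hs_maj : IsConcaveMajorant d T (partialSum s) :=
    ⟨by simpa only [partialSum_succ_sub] using antitone_zeroExtend hss hs.1,
      fun j hj => max_le (hsp j hj) (hsq j hj)⟩
  exact (majorizes_iff hss hr).2 fun k hk => (hR k hk).symm ▸ leastConcaveMajorant_le hs_maj hk
end

section
/- For 0 ≤ x ≤ 1/2 and a > 0, the duplication-type identity I_x(a,a) = (1/2) I_{4x(1−x)}(a, 1/2) holds for the regularised incomplete beta function. -/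
/-- The incomplete beta function `B_x(a,b) = ∫₀ˣ t^(a−1) (1−t)^(b−1) dt`. -/
noncomputable def incBeta (x a b : ℝ) : ℝ :=
  ∫ t in (0:ℝ)..x, t ^ (a - 1) * (1 - t) ^ (b - 1)

/-- The regularised incomplete beta function `I_x(a,b) = B_x(a,b)/B(a,b)`. -/
noncomputable def regIncBeta (x a b : ℝ) : ℝ :=
  incBeta x a b / incBeta 1 a b

/-!
The substitution `u = 4t(1 − t)` maps `[0, x]` monotonically onto `[0, 4x(1 − x)]` for `x ≤ 1/2`,
with `du = 4(1 − 2t) dt` and `1 − u = (1 − 2t)²`, so `B_{4x(1−x)}(a, 1/2) = 4^a B_x(a, a)`.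
At `x = 1/2` this gives `B(a, 1/2) = 4^a B_{1/2}(a, a)`, and `B(a, a) = 2 B_{1/2}(a, a)` by the
symmetry `t ↦ 1 − t`; dividing the two identities gives the theorem.
-/

open Set intervalIntegral Real

lemma intervalIntegrable_incBeta_integrand {a x : ℝ} (b : ℝ) (ha : 0 < a) (hx : x < 1) :
    IntervalIntegrable (fun t : ℝ => t ^ (a - 1) * (1 - t) ^ (b - 1)) MeasureTheory.volume 0 x := by
  refine (intervalIntegrable_rpow' (by linarith)).mul_continuousOn ?_
  refine ContinuousOn.rpow_const (by fun_prop) fun t ht => Or.inl ?_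
  have : t ≤ max 0 x := ht.2
  exact sub_ne_zero.mpr (by grind)

lemma integral_incBeta_integrand_one_sub (x a b : ℝ) :
    ∫ t in (1 - x)..1, t ^ (a - 1) * (1 - t) ^ (b - 1) = incBeta x b a := by
  have h := integral_comp_sub_left (fun t : ℝ => t ^ (a - 1) * (1 - t) ^ (b - 1)) 1 (a := 0) (b := x)
  simp only [sub_zero, sub_sub_cancel] at h
  rw [incBeta, ← h]
  simp only [mul_comm]

lemma incBeta_add_incBeta_one_sub {x a b : ℝ} (ha : 0 < a) (hb : 0 < b) (hx0 : 0 < x)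
    (hx1 : x < 1) : incBeta x a b + incBeta (1 - x) b a = incBeta 1 a b := by
  have hright : IntervalIntegrable (fun t : ℝ => t ^ (a - 1) * (1 - t) ^ (b - 1))
      MeasureTheory.volume x 1 := by
    simpa only [sub_zero, sub_sub_cancel, mul_comm] using
      ((intervalIntegrable_incBeta_integrand a hb (by linarith : 1 - x < 1)).comp_sub_left 1).symm
  rw [← integral_incBeta_integrand_one_sub (1 - x) a b, sub_sub_cancel]
  exact integral_add_adjacent_intervals (intervalIntegrable_incBeta_integrand b ha hx1) hright

lemma incBeta_one_eq_two_mul_incBeta_half {a : ℝ} (ha : 0 < a) :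
    incBeta 1 a a = 2 * incBeta (1 / 2) a a := by
  rw [← incBeta_add_incBeta_one_sub ha ha (by norm_num : (0 : ℝ) < 1 / 2) (by norm_num)]
  norm_num
  ring

lemma rpow_four_mul_mul_one_sub_mul {a t : ℝ} (ht0 : 0 < t) (ht : t < 1 / 2) :
    (4 * t * (1 - t)) ^ (a - 1) * (1 - 4 * t * (1 - t)) ^ (1 / 2 - 1 : ℝ) * (4 - 8 * t)
      = 4 ^ a * (t ^ (a - 1) * (1 - t) ^ (a - 1)) := by
  have hs : 0 < 1 - 2 * t := by linarith
  have hpow : (1 - 4 * t * (1 - t)) ^ (1 / 2 - 1 : ℝ) = (1 - 2 * t)⁻¹ := by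
    rw [show 1 - 4 * t * (1 - t) = (1 - 2 * t) ^ (2 : ℝ) by rw [rpow_two]; ring,
      ← rpow_mul hs.le]
    norm_num [rpow_neg_one]
  rw [hpow, mul_rpow (by positivity) (by linarith), mul_rpow (by norm_num) ht0.le,
    rpow_sub_one (by norm_num : (4 : ℝ) ≠ 0)]
  have hcancel : (1 - 2 * t)⁻¹ * (4 - 8 * t) = 4 := by field_simp; ring
  rw [mul_assoc _ (1 - 2 * t)⁻¹, hcancel]
  field_simp

lemma hasDerivAt_four_mul_mul_one_sub (t : ℝ) :
    HasDerivAt (fun t : ℝ => 4 * t * (1 - t)) (4 - 8 * t) t := by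
  have h : HasDerivAt (fun t : ℝ => 4 * t * (1 - t)) (4 * 1 * (1 - t) + 4 * t * (0 - 1)) t :=
    ((hasDerivAt_id t).const_mul 4).mul ((hasDerivAt_const t 1).sub (hasDerivAt_id t))
  exact h.congr_deriv (by ring)

lemma incBeta_four_mul_mul_one_sub (a : ℝ) {x : ℝ} (hx0 : 0 ≤ x) (hx1 : x ≤ 1 / 2) :
    incBeta (4 * x * (1 - x)) a (1 / 2) = 4 ^ a * incBeta x a a := by
  have hsub := integral_comp_mul_deriv_of_deriv_nonneg (a := 0) (b := x)
    (f := fun t => 4 * t * (1 - t)) (f' := fun t => 4 - 8 * t)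
    (g := fun u => u ^ (a - 1) * (1 - u) ^ (1 / 2 - 1 : ℝ)) (by fun_prop)
    (fun t _ => hasDerivAt_four_mul_mul_one_sub t)
    (fun t ht => by simp only [min_eq_left hx0, max_eq_right hx0, mem_Ioo] at ht; linarith)
  simp only [mul_zero, zero_mul, Function.comp_apply] at hsub
  rw [incBeta, incBeta, ← hsub, ← integral_const_mul]
  exact integral_congr_Ioo_of_le hx0 fun t ht =>
    rpow_four_mul_mul_one_sub_mul ht.1 (ht.2.trans_le hx1)

/-- Duplication-type identity `I_x(a,a) = (1/2) I_{4x(1−x)}(a, 1/2)` for `0 ≤ x ≤ 1/2`. -/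
theorem regIncBeta_duplication (x a : ℝ) (hx0 : 0 ≤ x) (hx1 : x ≤ 1 / 2) (ha : 0 < a) :
    regIncBeta x a a = (1 / 2) * regIncBeta (4 * x * (1 - x)) a (1 / 2) := by
  have hone := incBeta_four_mul_mul_one_sub a (x := 1 / 2) (by norm_num) le_rfl
  norm_num at hone
  rw [regIncBeta, regIncBeta, incBeta_four_mul_mul_one_sub a hx0 hx1, hone,
    incBeta_one_eq_two_mul_incBeta_half ha, mul_div_mul_left _ _ (by positivity)]
  ring
end
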